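/- arXiv:2512.23891 — 6 statements merged into one kernel-verified Lean document; each statement's English description precedes it below -/
import Mathlib

section
/- Let m and M be positive integers with M/2 < m < M, and let Y be a subset of the open integer interval (m, M). Then the submonoid generated by Y ∪ {m, M} is a numerical semigroup with multiplicity m and maximum primitive M if and only if gcd(Y ∪ {m, M}) = 1. -/
/-- A numerical semigroup: a cofinite additive submonoid of ℕ, viewed as a set. -/
noncomputable def IsNumericalSemigroup (S : Set ℕ) : Prop :=
  0 ∈ S ∧ (∀ a ∈ S, ∀ b ∈ S, a + b ∈ S) ∧ (Sᶜ : Set ℕ).Finite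

/-- The primitives (minimal generators): nonzero elements not a sum of two nonzero elements. -/
noncomputable def Primitives (S : Set ℕ) : Set ℕ :=
  {s | s ∈ S ∧ s ≠ 0 ∧ ∀ a ∈ S, ∀ b ∈ S, a ≠ 0 → b ≠ 0 → a + b ≠ s}

/-- The maximum primitive. -/
noncomputable def MaxPrim (S : Set ℕ) : ℕ := sSup (Primitives S)

/-- The multiplicity: the smallest nonzero element. -/
noncomputable def Multiplicity (S : Set ℕ) : ℕ := sInf {s | s ∈ S ∧ s ≠ 0}

/-- The Frobenius number: the largest natural number not in S. -/
noncomputable def Frobenius (S : Set ℕ) : ℕ := sSup (Sᶜ : Set ℕ)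

noncomputable def Conductor (S : Set ℕ) : ℕ := Frobenius S + 1

/-- The genus: number of positive integers not in S. -/
noncomputable def Genus (S : Set ℕ) : ℕ := ((Sᶜ : Set ℕ) \ {0}).ncard

/-- Depth: ⌈c/m⌉ -/
noncomputable def Depth (S : Set ℕ) : ℕ := (Conductor S + Multiplicity S - 1) / Multiplicity S

/-- Primitive depth: ⌈maxprim/m⌉ -/
noncomputable def PrimDepth (S : Set ℕ) : ℕ := (MaxPrim S + Multiplicity S - 1) / Multiplicity S

/-- Submonoid of ℕ generated by a set, as a set. -/
noncomputable def GeneratedBy (Y : Set ℕ) : Set ℕ := (AddSubmonoid.closure Y : AddSubmonoid ℕ)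

/-- Left elements: elements of S below the Frobenius number. -/
noncomputable def Lefts (S : Set ℕ) : Set ℕ := {s | s ∈ S ∧ s < Frobenius S}

noncomputable def Lefts' (S : Set ℕ) : Set ℕ := Lefts S ∪ {Frobenius S}

/-- Embedding dimension. -/
noncomputable def EmbDim (S : Set ℕ) : ℕ := (Primitives S).ncard

/-- gcd of a set of naturals: the greatest common divisor of all elements. -/
noncomputable def SetGcd (Y : Set ℕ) : ℕ := sSup {d : ℕ | ∀ y ∈ Y, d ∣ y}

/-- The map Ψ of the paper: S ↦ ⟨L'(S)/gcd(L'(S))⟩. -/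
noncomputable def Psi (S : Set ℕ) : Set ℕ :=
  GeneratedBy ((fun a => a / SetGcd (Lefts' S)) '' Lefts' S)

/-
Since every generator lies in `[m, M]` and `M < 2 m`, every nonzero element of the monoid is at
least `m` and no sum of two nonzero elements equals `M`, so the multiplicity is `m` and `M` is a
primitive; primitives of a generated monoid are generators, so `M` is the largest one. Hence
only cofiniteness is at stake, and a submonoid of `ℕ` is cofinite exactly when the gcd of its
generators is `1`: if it contains two consecutive integers the gcd divides `1`, and conversely
every large enough multiple of the gcd lies in the monoid.
-/

theorem setGcd_eq_nat_setGcd (s : Set ℕ) : SetGcd s = Nat.setGcd s := by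
  have hdiv : {d : ℕ | ∀ y ∈ s, d ∣ y} = {d | d ∣ Nat.setGcd s} := by
    ext d
    exact Nat.dvd_setGcd_iff.symm
  rw [SetGcd, hdiv]
  rcases eq_or_ne (Nat.setGcd s) 0 with h0 | h0
  · rw [h0]
    exact Nat.sSup_of_not_bddAbove fun ⟨b, hb⟩ =>
      absurd (hb (dvd_zero (b + 1))) (Nat.not_succ_le_self b)
  · exact IsGreatest.csSup_eq ⟨dvd_rfl, fun d hd => Nat.le_of_dvd (Nat.pos_of_ne_zero h0) hd⟩

theorem compl_closure_finite_iff (s : Set ℕ) :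
    ((AddSubmonoid.closure s : Set ℕ)ᶜ).Finite ↔ Nat.setGcd s = 1 := by
  constructor
  · intro hfin
    obtain ⟨n, hn⟩ := hfin.bddAbove
    have hmem : ∀ k, n < k → k ∈ AddSubmonoid.closure s := fun k hk =>
      of_not_not fun hk' => absurd (hn hk') (not_le.mpr hk)
    have hdvd_succ := Nat.setGcd_dvd_of_mem_closure (hmem (n + 2) (by omega))
    have hdvd := Nat.setGcd_dvd_of_mem_closure (hmem (n + 1) (by omega))
    exact Nat.dvd_one.mp ((Nat.dvd_add_right hdvd).mp hdvd_succ)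
  · intro hgcd
    obtain ⟨n, hn⟩ := Nat.exists_mem_closure_of_ge s
    refine (Set.finite_Iio n).subset fun k hk => ?_
    by_contra hkn
    exact hk (hn k (not_lt.mp hkn) (hgcd ▸ one_dvd k))

theorem isNumericalSemigroup_generatedBy_iff (s : Set ℕ) :
    IsNumericalSemigroup (GeneratedBy s) ↔ Nat.setGcd s = 1 := by
  rw [← compl_closure_finite_iff]
  exact ⟨fun h => h.2.2, fun h => ⟨zero_mem _, fun _ ha _ hb => add_mem ha hb, h⟩⟩

section Generators

variable {G : Set ℕ} {m : ℕ}

theorem le_of_mem_closure_of_ne_zero (hG : ∀ g ∈ G, m ≤ g) {s : ℕ}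
    (hs : s ∈ AddSubmonoid.closure G) (hs0 : s ≠ 0) : m ≤ s := by
  induction hs using AddSubmonoid.closure_induction with
  | mem x hx => exact hG x hx
  | zero => exact absurd rfl hs0
  | add x y _ _ ihx ihy =>
    rcases eq_or_ne x 0 with rfl | hx0
    · simpa using ihy (by simpa using hs0)
    · exact (ihx hx0).trans (Nat.le_add_right x y)

theorem multiplicity_generatedBy (hm : m ≠ 0) (hmG : m ∈ G) (hG : ∀ g ∈ G, m ≤ g) :
    Multiplicity (GeneratedBy G) = m :=
  IsLeast.csInf_eq ⟨⟨AddSubmonoid.subset_closure hmG, hm⟩,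
    fun _ ⟨hs, hs0⟩ => le_of_mem_closure_of_ne_zero hG hs hs0⟩

theorem primitives_generatedBy_subset : Primitives (GeneratedBy G) ⊆ G := by
  rintro s ⟨hs, hs0, hprim⟩
  induction hs using AddSubmonoid.closure_induction_left with
  | zero => exact absurd rfl hs0
  | add_left x hx y hy ih =>
    rcases eq_or_ne y 0 with rfl | hy0
    · simpa using hx
    rcases eq_or_ne x 0 with rfl | hx0
    · simp only [zero_add] at hs0 hprim ⊢
      exact ih hs0 hprim
    · exact absurd rfl (hprim x (AddSubmonoid.subset_closure hx) y hy hx0 hy0)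

theorem maxPrim_generatedBy {M : ℕ} (hMG : M ∈ G) (hG : ∀ g ∈ G, m ≤ g ∧ g ≤ M)
    (hM : M < 2 * m) : MaxPrim (GeneratedBy G) = M := by
  have hMprim : M ∈ Primitives (GeneratedBy G) := by
    refine ⟨AddSubmonoid.subset_closure hMG, by grind, fun a ha b hb ha0 hb0 hab => ?_⟩
    have hma := le_of_mem_closure_of_ne_zero (fun g hg => (hG g hg).1) ha ha0
    have hmb := le_of_mem_closure_of_ne_zero (fun g hg => (hG g hg).1) hb hb0
    omega
  exact IsGreatest.csSup_eq ⟨hMprim, fun s hs => (hG s (primitives_generatedBy_subset hs)).2⟩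

end Generators

theorem stmt2_general (m M : ℕ) (hmM : m < M) (h2 : M < 2 * m)
    (Y : Set ℕ) (hY : Y ⊆ Set.Ioo m M) :
    (IsNumericalSemigroup (GeneratedBy (Y ∪ {m, M})) ∧
      Multiplicity (GeneratedBy (Y ∪ {m, M})) = m ∧
      MaxPrim (GeneratedBy (Y ∪ {m, M})) = M) ↔
    SetGcd (Y ∪ {m, M}) = 1 := by
  have hG : ∀ g ∈ Y ∪ {m, M}, m ≤ g ∧ g ≤ M := by
    rintro g (hg | rfl | rfl)
    · exact ⟨(hY hg).1.le, (hY hg).2.le⟩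
    · exact ⟨le_rfl, hmM.le⟩
    · exact ⟨hmM.le, le_rfl⟩
  have hmult := multiplicity_generatedBy (by omega) (by simp) fun g hg => (hG g hg).1
  have hmax := maxPrim_generatedBy (by simp) hG h2
  rw [setGcd_eq_nat_setGcd, ← isNumericalSemigroup_generatedBy_iff]
  exact and_iff_left ⟨hmult, hmax⟩

/-- for M/2 < m < M and Y ⊆ (m,M), ⟨Y ∪ {m,M}⟩ is a numerical semigroup with
multiplicity m and maximum primitive M iff gcd(Y ∪ {m,M}) = 1. -/
theorem stmt2 (m M : ℕ) (hm : 0 < m) (hmM : m < M) (h2 : M < 2 * m)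
    (Y : Set ℕ) (hY : Y ⊆ Set.Ioo m M) :
    (IsNumericalSemigroup (GeneratedBy (Y ∪ {m, M})) ∧
      Multiplicity (GeneratedBy (Y ∪ {m, M})) = m ∧
      MaxPrim (GeneratedBy (Y ∪ {m, M})) = M) ↔
    SetGcd (Y ∪ {m, M}) = 1 :=
  stmt2_general m M hmM h2 Y hY
end

section
/- For every integer d > 0, the number of numerical semigroups with Frobenius number d and depth 2 equals 2^(⌊(d−1)/2⌋) − 1. -/
/-! A numerical semigroup `S` with Frobenius number `d` and depth 2 has multiplicity `m` with
`d / 2 < m ≤ d`, so its nonzero elements below `d` all lie in the interval `(d / 2, d)`, which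
it meets. Conversely, for any nonempty `X ⊆ (d / 2, d)` the set `{0} ∪ X ∪ (d, ∞)` is closed
under addition, because two elements of `X` already sum past `d`. The semigroups in question
are therefore in bijection with the nonempty subsets of `(d / 2, d)`, an interval of
`⌊(d - 1) / 2⌋` integers. -/

open Set Classical

def depthTwoSemigroup (d : ℕ) (X : Finset ℕ) : Set ℕ := insert 0 (↑X ∪ Ioi d)

lemma mem_depthTwoSemigroup {d n : ℕ} {X : Finset ℕ} :
    n ∈ depthTwoSemigroup d X ↔ n = 0 ∨ n ∈ X ∨ d < n := by
  simp [depthTwoSemigroup]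

lemma isGreatest_frobenius {S : Set ℕ} (hfin : Sᶜ.Finite) (hne : S ≠ univ) :
    IsGreatest Sᶜ (Frobenius S) :=
  ⟨Nat.sSup_mem (nonempty_compl.mpr hne) hfin.bddAbove, fun _ hn => le_csSup hfin.bddAbove hn⟩

lemma frobenius_eq_of_isGreatest {S : Set ℕ} {d : ℕ} (hd : IsGreatest Sᶜ d) :
    Frobenius S = d :=
  hd.csSup_eq

lemma isLeast_multiplicity {S : Set ℕ} {s : ℕ} (hs : s ∈ S) (hs0 : s ≠ 0) :
    IsLeast {s | s ∈ S ∧ s ≠ 0} (Multiplicity S) :=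
  ⟨Nat.sInf_mem ⟨s, hs, hs0⟩, fun _ ht => Nat.sInf_le ht⟩

lemma depth_eq_two_iff {S : Set ℕ} (hm : 0 < Multiplicity S) :
    Depth S = 2 ↔ Multiplicity S ≤ Frobenius S ∧ Frobenius S < 2 * Multiplicity S := by
  rw [Depth, Conductor, Nat.div_eq_iff hm]
  omega

section

variable {d : ℕ} {X : Finset ℕ}

lemma isNumericalSemigroup_depthTwoSemigroup (hX : X ⊆ Finset.Ioo (d / 2) d) :
    IsNumericalSemigroup (depthTwoSemigroup d X) := by
  have hXd : ∀ x ∈ X, d / 2 < x ∧ x < d := fun x hx => Finset.mem_Ioo.mp (hX hx)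
  refine ⟨mem_depthTwoSemigroup.mpr (Or.inl rfl), fun a ha b hb => ?_, ?_⟩
  · rcases mem_depthTwoSemigroup.mp ha with rfl | haX | hda
    · simpa using hb
    rcases mem_depthTwoSemigroup.mp hb with rfl | hbX | hdb
    · simpa using ha
    all_goals refine mem_depthTwoSemigroup.mpr (Or.inr (Or.inr ?_))
    · have := hXd a haX
      have := hXd b hbX
      omega
    all_goals omega
  · refine (finite_Iic d).subset fun n hn => ?_
    by_contra hnd
    exact hn (mem_depthTwoSemigroup.mpr (Or.inr (Or.inr (not_le.mp hnd))))

lemma isGreatest_compl_depthTwoSemigroup (hX : X ⊆ Finset.Ioo (d / 2) d) (hne : X.Nonempty) :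
    IsGreatest (depthTwoSemigroup d X)ᶜ d := by
  obtain ⟨x, hx⟩ := hne
  have hxd := Finset.mem_Ioo.mp (hX hx)
  refine ⟨fun hd => ?_, fun n hn => not_lt.mp fun hdn => hn ?_⟩
  · rcases mem_depthTwoSemigroup.mp hd with hd | hd | hd
    · omega
    · have := Finset.mem_Ioo.mp (hX hd)
      omega
    · omega
  · exact mem_depthTwoSemigroup.mpr (Or.inr (Or.inr hdn))

lemma depth_depthTwoSemigroup (hX : X ⊆ Finset.Ioo (d / 2) d) (hne : X.Nonempty) :
    Depth (depthTwoSemigroup d X) = 2 := by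
  obtain ⟨x, hx⟩ := hne
  have hxd := Finset.mem_Ioo.mp (hX hx)
  obtain ⟨⟨hm, hm0⟩, hmin⟩ :=
    isLeast_multiplicity (mem_depthTwoSemigroup.mpr (Or.inr (Or.inl hx))) (by omega)
  have hmx : Multiplicity (depthTwoSemigroup d X) ≤ x := hmin ⟨mem_depthTwoSemigroup.mpr
    (Or.inr (Or.inl hx)), by omega⟩
  have hmX : Multiplicity (depthTwoSemigroup d X) ∈ X := by
    rcases mem_depthTwoSemigroup.mp hm with h | h | h
    · exact absurd h hm0
    · exact h
    · omega
  have := Finset.mem_Ioo.mp (hX hmX)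
  rw [depth_eq_two_iff (Nat.pos_of_ne_zero hm0),
    frobenius_eq_of_isGreatest (isGreatest_compl_depthTwoSemigroup hX ⟨x, hx⟩)]
  omega

lemma filter_mem_depthTwoSemigroup (hX : X ⊆ Finset.Ioo (d / 2) d) :
    (Finset.Ioo (d / 2) d).filter (· ∈ depthTwoSemigroup d X) = X := by
  ext n
  simp only [Finset.mem_filter, mem_depthTwoSemigroup, Finset.mem_Ioo]
  constructor
  · rintro ⟨hn, rfl | hnX | hdn⟩
    exacts [by omega, hnX, by omega]
  · intro hnX
    exact ⟨Finset.mem_Ioo.mp (hX hnX), Or.inr (Or.inl hnX)⟩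

lemma depthTwoSemigroup_isDepthTwo (hX : X ⊆ Finset.Ioo (d / 2) d) (hne : X.Nonempty) :
    IsNumericalSemigroup (depthTwoSemigroup d X) ∧ depthTwoSemigroup d X ≠ univ ∧
      Frobenius (depthTwoSemigroup d X) = d ∧ Depth (depthTwoSemigroup d X) = 2 :=
  ⟨isNumericalSemigroup_depthTwoSemigroup hX,
    fun h => (isGreatest_compl_depthTwoSemigroup hX hne).1 (h ▸ trivial),
    frobenius_eq_of_isGreatest (isGreatest_compl_depthTwoSemigroup hX hne),
    depth_depthTwoSemigroup hX hne⟩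

end

lemma eq_depthTwoSemigroup {S : Set ℕ} {d : ℕ} (hS : IsNumericalSemigroup S) (hne : S ≠ univ)
    (hfrob : Frobenius S = d) (hdepth : Depth S = 2) :
    ((Finset.Ioo (d / 2) d).filter (· ∈ S)).Nonempty ∧
      S = depthTwoSemigroup d ((Finset.Ioo (d / 2) d).filter (· ∈ S)) := by
  obtain ⟨h0, -, hfin⟩ := hS
  obtain ⟨hdS, hdmax⟩ := hfrob ▸ isGreatest_frobenius hfin hne
  have hgt : ∀ n, d < n → n ∈ S := fun n hdn => not_not.mp fun hn => (hdmax hn).not_gt hdn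
  obtain ⟨⟨hm, hm0⟩, hmin⟩ := isLeast_multiplicity (hgt (d + 1) d.lt_succ_self) d.succ_ne_zero
  have hmd := (depth_eq_two_iff (Nat.pos_of_ne_zero hm0)).mp hdepth
  rw [hfrob] at hmd
  have hm_ne_d : Multiplicity S ≠ d := fun h => hdS (h ▸ hm)
  refine ⟨⟨Multiplicity S, ?_⟩, ?_⟩
  · simp only [Finset.mem_filter, Finset.mem_Ioo]
    exact ⟨⟨by omega, by omega⟩, hm⟩
  ext n
  simp only [mem_depthTwoSemigroup, Finset.mem_filter, Finset.mem_Ioo]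
  constructor
  · intro hn
    have hnd : n ≠ d := fun h => hdS (h ▸ hn)
    by_cases hn0 : n = 0
    · exact Or.inl hn0
    have := hmin ⟨hn, hn0⟩
    by_cases hdn : d < n
    · exact Or.inr (Or.inr hdn)
    · exact Or.inr (Or.inl ⟨⟨by omega, by omega⟩, hn⟩)
  · rintro (rfl | ⟨-, hn⟩ | hdn)
    exacts [h0, hn, hgt n hdn]

lemma setOf_depth_eq_two_eq_image (d : ℕ) :
    {S : Set ℕ | IsNumericalSemigroup S ∧ S ≠ univ ∧ Frobenius S = d ∧ Depth S = 2} =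
      depthTwoSemigroup d '' {X | X ⊆ Finset.Ioo (d / 2) d ∧ X.Nonempty} := by
  ext S
  constructor
  · rintro ⟨hS, hne, hfrob, hdepth⟩
    obtain ⟨hX, hSX⟩ := eq_depthTwoSemigroup hS hne hfrob hdepth
    exact ⟨_, ⟨Finset.filter_subset _ _, hX⟩, hSX.symm⟩
  · rintro ⟨X, ⟨hX, hne⟩, rfl⟩
    exact depthTwoSemigroup_isDepthTwo hX hne

lemma injOn_depthTwoSemigroup (d : ℕ) :
    InjOn (depthTwoSemigroup d) {X | X ⊆ Finset.Ioo (d / 2) d} := fun X hX Y hY hXY => by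
  rw [← filter_mem_depthTwoSemigroup hX, ← filter_mem_depthTwoSemigroup hY, hXY]

lemma ncard_setOf_subset_nonempty {α : Type*} (s : Finset α) :
    {X | X ⊆ s ∧ X.Nonempty}.ncard = 2 ^ s.card - 1 := by
  have : {X | X ⊆ s ∧ X.Nonempty} = ↑(s.powerset.erase ∅) := by
    ext X
    simp [Finset.nonempty_iff_ne_empty, and_comm]
  rw [this, ncard_coe_finset, Finset.card_erase_of_mem (Finset.empty_mem_powerset _),
    Finset.card_powerset]

theorem stmt7_general (d : ℕ) :
    {S : Set ℕ | IsNumericalSemigroup S ∧ S ≠ Set.univ ∧ Frobenius S = d ∧ Depth S = 2}.ncard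
      = 2 ^ ((d - 1) / 2) - 1 := by
  rw [setOf_depth_eq_two_eq_image,
    ((injOn_depthTwoSemigroup d).mono fun _ hX => hX.1).ncard_image,
    ncard_setOf_subset_nonempty, Nat.card_Ioo]
  congr 2
  omega

/-- the number of numerical semigroups with Frobenius number d and depth 2 is
2^⌊(d−1)/2⌋ − 1. -/
theorem stmt7 (d : ℕ) (hd : 0 < d) :
    {S : Set ℕ | IsNumericalSemigroup S ∧ S ≠ Set.univ ∧ Frobenius S = d ∧ Depth S = 2}.ncard
      = 2 ^ ((d - 1) / 2) - 1 :=
  stmt7_general d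
end

section
/- For every integer n > 1 and every positive integer k, there is a bijection Ψ between the set of numerical semigroups with Frobenius number n and depth k, and the disjoint union over divisors d of n of the sets of numerical semigroups with maximum primitive d and primitive depth k, given by Ψ(S) = ⟨ L'(S)/gcd(L'(S)) ⟩, where L'(S) is the set of elements of S less than the Frobenius number together with the Frobenius number itself. -/
namespace NS9

lemma gen_mem {Y : Set ℕ} {y : ℕ} (h : y ∈ Y) : y ∈ GeneratedBy Y :=
  AddSubmonoid.subset_closure h

lemma gen_zero (Y : Set ℕ) : (0:ℕ) ∈ GeneratedBy Y := (AddSubmonoid.closure Y).zero_mem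

lemma gen_add {Y : Set ℕ} {a b : ℕ} (ha : a ∈ GeneratedBy Y) (hb : b ∈ GeneratedBy Y) :
    a + b ∈ GeneratedBy Y := (AddSubmonoid.closure Y).add_mem ha hb

lemma gen_mul {Y : Set ℕ} {a : ℕ} (ha : a ∈ GeneratedBy Y) (q : ℕ) :
    q * a ∈ GeneratedBy Y := by
  have := (AddSubmonoid.closure Y).nsmul_mem ha q
  have h : q * a ∈ AddSubmonoid.closure Y := by simpa [nsmul_eq_mul] using this
  exact h

lemma gen_mono {Y Z : Set ℕ} (h : Y ⊆ Z) : GeneratedBy Y ⊆ GeneratedBy Z :=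
  fun _ hx => AddSubmonoid.closure_mono h hx

lemma gen_subset {Y T : Set ℕ} (h0 : (0:ℕ) ∈ T)
    (hadd : ∀ a ∈ T, ∀ b ∈ T, a + b ∈ T) (hYT : Y ⊆ T) : GeneratedBy Y ⊆ T := by
  intro x hx
  induction hx using AddSubmonoid.closure_induction with
  | mem y hy => exact hYT hy
  | zero => exact h0
  | add a b _ _ ha hb => exact hadd a ha b hb

/-- Elements of the closure that lie below M are generators, provided Y is
"closed below M". -/
lemma gen_below {Y : Set ℕ} {M : ℕ} (h0 : (0:ℕ) ∈ Y)
    (hadd : ∀ a ∈ Y, ∀ b ∈ Y, a + b ≤ M → a + b ∈ Y) :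
    ∀ x ∈ GeneratedBy Y, x ≤ M → x ∈ Y := by
  intro x hx
  induction hx using AddSubmonoid.closure_induction with
  | mem y hy => exact fun _ => hy
  | zero => exact fun _ => h0
  | add a b _ _ ha hb =>
    intro hab
    exact hadd a (ha (le_trans (Nat.le_add_right a b) hab)) b
      (hb (le_trans (Nat.le_add_left b a) hab)) hab

/-- Every nonzero element of the closure is a generator or a sum of two nonzero
elements of the closure. -/
lemma gen_decomp {Y : Set ℕ} :
    ∀ x ∈ GeneratedBy Y, x ≠ 0 →
      x ∈ Y ∨ ∃ a ∈ GeneratedBy Y, ∃ b ∈ GeneratedBy Y, a ≠ 0 ∧ b ≠ 0 ∧ a + b = x := by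
  intro x hx
  induction hx using AddSubmonoid.closure_induction with
  | mem y hy => exact fun _ => Or.inl hy
  | zero => exact fun h => absurd rfl h
  | add a b hma hmb ha hb =>
    intro hab
    rcases Nat.eq_zero_or_pos a with h0 | hpa
    · subst h0; simpa using hb (by simpa using hab)
    rcases Nat.eq_zero_or_pos b with h0 | hpb
    · subst h0; simpa using ha (by simpa using hab)
    · exact Or.inr ⟨a, hma, b, hmb, by omega, by omega, rfl⟩


lemma prim_sub_gen {Y : Set ℕ} {p : ℕ} (hp : p ∈ Primitives (GeneratedBy Y)) : p ∈ Y := by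
  obtain ⟨hpm, hp0, hps⟩ := hp
  rcases gen_decomp p hpm hp0 with h | ⟨a, ha, b, hb, ha0, hb0, hab⟩
  · exact h
  · exact absurd hab (hps a ha b hb ha0 hb0)

/-- If Y ⊆ [0,M], closed below M, M ∈ Y not a sum of two nonzero elements of Y,
then M is the maximum primitive of the closure. -/
lemma maxprim_gen {Y : Set ℕ} {M : ℕ} (h0 : (0:ℕ) ∈ Y) (hM : M ∈ Y) (hM0 : M ≠ 0)
    (hle : ∀ y ∈ Y, y ≤ M)
    (hadd : ∀ a ∈ Y, ∀ b ∈ Y, a + b ≤ M → a + b ∈ Y)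
    (hns : ∀ a ∈ Y, ∀ b ∈ Y, a ≠ 0 → b ≠ 0 → a + b ≠ M) :
    MaxPrim (GeneratedBy Y) = M := by
  have hMp : M ∈ Primitives (GeneratedBy Y) := by
    refine ⟨gen_mem hM, hM0, ?_⟩
    intro a ha b hb ha0 hb0 hab
    have haM : a ∈ Y := gen_below h0 hadd a ha (by omega)
    have hbM : b ∈ Y := gen_below h0 hadd b hb (by omega)
    exact hns a haM b hbM ha0 hb0 hab
  have hbdd : BddAbove (Primitives (GeneratedBy Y)) :=
    ⟨M, fun p hp => hle p (prim_sub_gen hp)⟩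
  exact le_antisymm (csSup_le ⟨M, hMp⟩ (fun p hp => hle p (prim_sub_gen hp)))
    (le_csSup hbdd hMp)

lemma mult_gen {Y : Set ℕ} {μ : ℕ} (hμ : μ ∈ Y) (hμ0 : μ ≠ 0)
    (hmin : ∀ y ∈ Y, y ≠ 0 → μ ≤ y) :
    Multiplicity (GeneratedBy Y) = μ := by
  have hlow : ∀ x ∈ GeneratedBy Y, x ≠ 0 → μ ≤ x := by
    intro x hx
    induction hx using AddSubmonoid.closure_induction with
    | mem y hy => exact hmin y hy
    | zero => exact fun h => absurd rfl h
    | add a b _ _ ha hb =>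
      intro hab
      rcases Nat.eq_zero_or_pos a with h0 | hpa
      · subst h0; simpa using hb (by simpa using hab)
      · have := ha (by omega); omega
  exact le_antisymm (Nat.sInf_le ⟨gen_mem hμ, hμ0⟩)
    (le_csInf ⟨μ, gen_mem hμ, hμ0⟩ (fun x hx => hlow x hx.1 hx.2))

/-- If the only common divisor of Y is 1, the closure of Y is cofinite. -/
lemma gen_cofinite {Y : Set ℕ} (hg : ∀ e : ℕ, (∀ y ∈ Y, e ∣ y) → e = 1) :
    ((GeneratedBy Y)ᶜ : Set ℕ).Finite := by
  classical
  -- Y has a nonzero element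
  have hY0 : ∃ y ∈ Y, y ≠ 0 := by
    by_contra h
    push_neg at h
    have : (0:ℕ) = 1 := hg 0 (fun y hy => by rw [h y hy])
    omega
  obtain ⟨y0, hy0Y, hy00⟩ := hY0
  set C : Set ℕ := {c | 0 < c ∧ ∃ u, u ∈ GeneratedBy Y ∧ u + c ∈ GeneratedBy Y} with hC
  have hCne : C.Nonempty := ⟨y0, by omega, 0, gen_zero Y, by simpa using gen_mem hy0Y⟩
  set c0 := sInf C with hc0
  have hc0C : c0 ∈ C := Nat.sInf_mem hCne
  obtain ⟨hc0pos, u, hu, huc⟩ := hc0C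
  have hdvd : ∀ y ∈ Y, c0 ∣ y := by
    intro y hy
    by_contra hnd
    have hr : 0 < y % c0 := Nat.pos_of_ne_zero (fun h => hnd (Nat.dvd_of_mod_eq_zero h))
    have hrC : y % c0 ∈ C := by
      refine ⟨hr, (y / c0) * (u + c0), gen_mul huc _, ?_⟩
      have hm := Nat.div_add_mod y c0
      have : (y / c0) * (u + c0) + y % c0 = (y / c0) * u + (c0 * (y / c0) + y % c0) := by
        ring
      rw [this, hm]
      exact gen_add (gen_mul hu _) (gen_mem hy)
    have := Nat.sInf_le hrC
    have hlt : y % c0 < c0 := Nat.mod_lt y hc0pos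
    omega
  have hc1 : c0 = 1 := hg c0 hdvd
  rw [hc1] at huc
  -- u and u+1 are both in the closure
  rcases Nat.eq_zero_or_pos u with h0 | hupos
  · -- 1 ∈ closure, so closure = univ
    subst h0
    have h1 : (1:ℕ) ∈ GeneratedBy Y := by simpa using huc
    have : ∀ x : ℕ, x ∈ GeneratedBy Y := fun x => by simpa using gen_mul h1 x
    have : ((GeneratedBy Y)ᶜ : Set ℕ) = ∅ := by
      ext x; simp [this x]
    rw [this]; exact Set.finite_empty
  · apply Set.Finite.subset (Set.finite_Iio (u * u))
    intro x hx
    simp only [Set.mem_Iio]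
    by_contra hge
    push_neg at hge
    apply hx
    have hq : u ≤ x / u := (Nat.le_div_iff_mul_le hupos).mpr (by nlinarith)
    have hrlt : x % u < u := Nat.mod_lt x hupos
    have hdec : x = (x / u - x % u) * u + (x % u) * (u + 1) := by
      have h2 : (x / u - x % u) * u + (x % u) * u = (x / u) * u := by
        rw [← Nat.add_mul]
        congr 1
        omega
      have h3 := Nat.div_add_mod x u
      calc x = u * (x / u) + x % u := h3.symm
        _ = ((x / u - x % u) * u + (x % u) * u) + x % u := by rw [h2]; ring
        _ = (x / u - x % u) * u + (x % u) * (u + 1) := by ring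
    rw [hdec]
    exact gen_add (gen_mul hu _) (gen_mul huc _)

/-- ceiling division: (a + b - 1)/b = a/b + 1 when b ∤ a. -/
lemma ceil_div {a b : ℕ} (hb : 0 < b) (h : ¬ b ∣ a) : (a + b - 1) / b = a / b + 1 := by
  have hr : 0 < a % b := Nat.pos_of_ne_zero (fun hh => h (Nat.dvd_of_mod_eq_zero hh))
  have hrlt : a % b < b := Nat.mod_lt a hb
  have hmod := Nat.div_add_mod a b
  have hba : b * (a / b + 1) = b * (a / b) + b := by ring
  have key : a + b - 1 = b * (a / b + 1) + (a % b - 1) := by omega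
  rw [key, Nat.mul_add_div hb]
  have h2 : (a % b - 1) / b = 0 := Nat.div_eq_of_lt (by omega)
  omega


lemma setGcd_spec {W : Set ℕ} (hW : W.Finite) {w0 : ℕ} (hw0 : w0 ∈ W) (h0 : w0 ≠ 0) :
    (∀ w ∈ W, SetGcd W ∣ w) ∧ (∀ e, (∀ w ∈ W, e ∣ w) → e ∣ SetGcd W) ∧ SetGcd W ≠ 0 := by
  classical
  set G := hW.toFinset.gcd id with hG
  have hGd : ∀ w ∈ W, G ∣ w := fun w hw => by
    simpa using Finset.gcd_dvd (f := id) (hW.mem_toFinset.mpr hw)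
  have hdG : ∀ e, (∀ w ∈ W, e ∣ w) → e ∣ G := fun e he =>
    Finset.dvd_gcd (fun b hb => he b (hW.mem_toFinset.mp hb))
  have hG0 : G ≠ 0 := by
    intro h
    apply h0
    have := hGd w0 hw0
    rw [h] at this
    exact Nat.eq_zero_of_zero_dvd this
  have hbdd : BddAbove {d : ℕ | ∀ y ∈ W, d ∣ y} := by
    refine ⟨w0, fun e he => ?_⟩
    simp only [Set.mem_setOf_eq] at he
    exact Nat.le_of_dvd (by omega) (he w0 hw0)
  have hmemG : G ∈ {d : ℕ | ∀ y ∈ W, d ∣ y} := by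
    simp only [Set.mem_setOf_eq]; exact hGd
  have hEq : SetGcd W = G := by
    apply le_antisymm
    · apply csSup_le ⟨G, hmemG⟩
      intro e he
      simp only [Set.mem_setOf_eq] at he
      exact Nat.le_of_dvd (Nat.pos_of_ne_zero hG0) (hdG e he)
    · exact le_csSup hbdd hmemG
  rw [hEq]
  exact ⟨hGd, hdG, hG0⟩


lemma frobenius_facts {S : Set ℕ} {n : ℕ} (hNS : IsNumericalSemigroup S)
    (hne : S ≠ Set.univ) (hF : Frobenius S = n) :
    n ∉ S ∧ (∀ x, n < x → x ∈ S) := by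
  obtain ⟨h0, hadd, hfin⟩ := hNS
  have hcne : (Sᶜ : Set ℕ).Nonempty := by
    rw [Set.nonempty_compl]; exact hne
  have hbdd : BddAbove (Sᶜ : Set ℕ) := hfin.bddAbove
  have hmem : n ∈ (Sᶜ : Set ℕ) := by rw [← hF]; exact Nat.sSup_mem hcne hbdd
  refine ⟨hmem, fun x hx => ?_⟩
  by_contra hxS
  have hxc : x ∈ (Sᶜ : Set ℕ) := hxS
  have : x ≤ n := by rw [← hF]; exact le_csSup hbdd hxc
  omega

lemma mul_mem_of {S : Set ℕ} (h0 : (0:ℕ) ∈ S) (hadd : ∀ a ∈ S, ∀ b ∈ S, a + b ∈ S) :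
    ∀ q s, s ∈ S → q * s ∈ S := by
  intro q
  induction q with
  | zero => intro s _; simpa using h0
  | succ q ih =>
    intro s hs
    have : (q + 1) * s = q * s + s := by ring
    rw [this]
    exact hadd _ (ih s hs) _ hs

lemma mem_gen_primitives {T : Set ℕ} :
    ∀ t ∈ T, t ∈ GeneratedBy (Primitives T) := by
  intro t
  induction t using Nat.strong_induction_on with
  | _ t ih =>
    intro ht
    rcases Nat.eq_zero_or_pos t with h | h
    · subst h; exact gen_zero _
    by_cases hp : t ∈ Primitives T
    · exact gen_mem hp
    · simp only [Primitives, Set.mem_setOf_eq] at hp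
      push_neg at hp
      obtain ⟨a, ha, b, hb, ha0, hb0, hab⟩ := hp ht (by omega)
      have hab' : a + b = t := hab
      have h1 : a < t := by omega
      have h2 : b < t := by omega
      exact hab' ▸ gen_add (ih a h1 ha) (ih b h2 hb)


noncomputable def Phi (n : ℕ) (T : Set ℕ) : Set ℕ :=
  (fun t => (n / MaxPrim T) * t) '' (T ∩ Set.Iio (MaxPrim T)) ∪ Set.Ici (n + 1)

lemma forwardMain (n : ℕ) (hn : 1 < n) (S : Set ℕ) (hNS : IsNumericalSemigroup S)
    (hne : S ≠ Set.univ) (hF : Frobenius S = n) :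
    IsNumericalSemigroup (Psi S) ∧ MaxPrim (Psi S) ∣ n ∧ PrimDepth (Psi S) = Depth S ∧
      Phi n (Psi S) = S := by
  obtain ⟨h0S, haddS, hfinS⟩ := hNS
  obtain ⟨hnS, hgt⟩ := frobenius_facts ⟨h0S, haddS, hfinS⟩ hne hF
  have hn0 : n ≠ 0 := by omega
  set A := Lefts' S with hA
  set g := SetGcd A with hg
  set Y := (fun a => a / g) '' A with hY
  have hPsi : Psi S = GeneratedBy Y := rfl
  -- facts about A
  have hAeq : A = Lefts S ∪ {n} := by rw [hA, Lefts', hF]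
  have hLsub : Lefts S ⊆ Set.Iio n := fun s hs => by
    have := hs.2; rw [hF] at this; exact this
  have hAfin : A.Finite := by
    rw [hAeq]
    exact ((Set.finite_Iio n).subset hLsub).union (Set.finite_singleton n)
  have hnA : n ∈ A := by rw [hAeq]; right; rfl
  have h0A : (0:ℕ) ∈ A := by
    rw [hAeq]; left; exact ⟨h0S, by rw [hF]; omega⟩
  have hAle : ∀ a ∈ A, a ≤ n := by
    intro a ha; rw [hAeq] at ha
    rcases ha with h | h
    · exact le_of_lt (hLsub h)
    · simp at h; omega
  have hAS : ∀ a ∈ A, a < n → a ∈ S := by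
    intro a ha hlt; rw [hAeq] at ha
    rcases ha with h | h
    · exact h.1
    · simp at h; omega
  have hSA : ∀ s ∈ S, s < n → s ∈ A := by
    intro s hs hlt; rw [hAeq]; left; exact ⟨hs, by rw [hF]; exact hlt⟩
  have hAadd : ∀ a ∈ A, ∀ b ∈ A, a + b ≤ n → a + b ∈ A := by
    intro a ha b hb hle
    rcases Nat.lt_or_ge (a + b) n with h | h
    · have haS : a ∈ S := hAS a ha (by omega)
      have hbS : b ∈ S := hAS b hb (by omega)
      exact hSA _ (haddS a haS b hbS) h
    · have : a + b = n := by omega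
      rw [this]; exact hnA
  have hAns : ∀ a ∈ A, ∀ b ∈ A, a ≠ 0 → b ≠ 0 → a + b ≠ n := by
    intro a ha b hb ha0 hb0 hab
    have haS : a ∈ S := hAS a ha (by omega)
    have hbS : b ∈ S := hAS b hb (by
      have := hAle a ha; omega)
    exact hnS (hab ▸ haddS a haS b hbS)
  -- gcd facts
  obtain ⟨hgdvd, hdvdg, hg0⟩ := setGcd_spec hAfin hnA hn0
  have hgn : g ∣ n := hgdvd n hnA
  set d := n / g with hd
  have hgd : g * d = n := Nat.mul_div_cancel' hgn
  have hgpos : 0 < g := Nat.pos_of_ne_zero hg0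
  have hd0 : d ≠ 0 := by
    intro h; rw [h] at hgd; omega
  -- facts about Y
  have hYmem : ∀ y, y ∈ Y ↔ g * y ∈ A := by
    intro y
    constructor
    · rintro ⟨a, ha, rfl⟩
      rwa [Nat.mul_div_cancel' (hgdvd a ha)]
    · intro h
      exact ⟨g * y, h, Nat.mul_div_cancel_left _ hgpos⟩
  have h0Y : (0:ℕ) ∈ Y := (hYmem 0).mpr (by simpa using h0A)
  have hdY : d ∈ Y := (hYmem d).mpr (by rw [hgd]; exact hnA)
  have hYle : ∀ y ∈ Y, y ≤ d := by
    intro y hy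
    have := hAle _ ((hYmem y).mp hy)
    rw [← hgd] at this
    exact Nat.le_of_mul_le_mul_left this hgpos
  have hYadd : ∀ a ∈ Y, ∀ b ∈ Y, a + b ≤ d → a + b ∈ Y := by
    intro a ha b hb hle
    rw [hYmem]
    rw [Nat.mul_add]
    apply hAadd _ ((hYmem a).mp ha) _ ((hYmem b).mp hb)
    rw [← Nat.mul_add, ← hgd]
    exact Nat.mul_le_mul_left g hle
  have hYns : ∀ a ∈ Y, ∀ b ∈ Y, a ≠ 0 → b ≠ 0 → a + b ≠ d := by
    intro a ha b hb ha0 hb0 hab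
    apply hAns _ ((hYmem a).mp ha) _ ((hYmem b).mp hb)
      (by positivity) (by positivity)
    rw [← Nat.mul_add, hab, hgd]
  have hYgcd : ∀ e : ℕ, (∀ y ∈ Y, e ∣ y) → e = 1 := by
    intro e he
    have hge : ∀ a ∈ A, g * e ∣ a := by
      intro a ha
      have h1 : e ∣ a / g := he _ ⟨a, ha, rfl⟩
      have h2 : g * (a / g) = a := Nat.mul_div_cancel' (hgdvd a ha)
      rw [← h2]
      exact Nat.mul_dvd_mul_left g h1
    have : g * e ∣ g := by
      have := hdvdg (g * e) hge
      rw [hg]; exact this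
    have : g * e ∣ g * 1 := by simpa using this
    have he1 : e ∣ 1 := (Nat.mul_dvd_mul_iff_left hgpos).mp this
    exact Nat.dvd_one.mp he1
  -- the four conclusions
  have hMax : MaxPrim (Psi S) = d := by
    rw [hPsi]; exact maxprim_gen h0Y hdY hd0 hYle hYadd hYns
  have hNum : IsNumericalSemigroup (Psi S) := by
    rw [hPsi]
    exact ⟨gen_zero Y, fun a ha b hb => gen_add ha hb, gen_cofinite hYgcd⟩
  have hDvd : MaxPrim (Psi S) ∣ n := by
    rw [hMax]; exact ⟨g, by rw [← hgd]; ring⟩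
  refine ⟨hNum, hDvd, ?_, ?_⟩
  · -- PrimDepth = Depth
    set m := Multiplicity S with hm
    have hSne : {s | s ∈ S ∧ s ≠ 0}.Nonempty := ⟨n + 1, hgt _ (by omega), by omega⟩
    have hmem := Nat.sInf_mem hSne
    have hmS : m ∈ S := hmem.1
    have hm0 : m ≠ 0 := hmem.2
    have hmin : ∀ s ∈ S, s ≠ 0 → m ≤ s := fun s hs hs0 => Nat.sInf_le ⟨hs, hs0⟩
    have hmnd : ¬ m ∣ n := by
      intro hdvd
      apply hnS
      have : n = (n / m) * m := (Nat.div_mul_cancel hdvd).symm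
      rw [this]
      exact mul_mem_of h0S haddS _ _ hmS
    have hmn : m ≠ n := fun h => hnS (h ▸ hmS)
    rcases Nat.lt_or_ge m n with hmlt | hmge
    · -- main case : m < n
      have hmA : m ∈ A := hSA m hmS hmlt
      set m' := m / g with hm'
      have hgm : g * m' = m := Nat.mul_div_cancel' (hgdvd m hmA)
      have hm'Y : m' ∈ Y := (hYmem m').mpr (by rw [hgm]; exact hmA)
      have hm'0 : m' ≠ 0 := by
        intro h
        apply hm0
        rw [← hgm, h, Nat.mul_zero]
      have hm'min : ∀ y ∈ Y, y ≠ 0 → m' ≤ y := by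
        intro y hy hy0
        have hyA := (hYmem y).mp hy
        have h1 : m ≤ g * y := by
          rcases Nat.lt_or_ge (g * y) n with h | h
          · exact hmin _ (hAS _ hyA h) (by positivity)
          · have := hAle _ hyA; omega
        rw [← hgm] at h1
        exact Nat.le_of_mul_le_mul_left h1 hgpos
      have hMult : Multiplicity (Psi S) = m' := by
        rw [hPsi]; exact mult_gen hm'Y hm'0 hm'min
      have hm'd : ¬ m' ∣ d := by
        intro h
        apply hmnd
        rw [← hgm, ← hgd]
        exact Nat.mul_dvd_mul_left g h
      have hm'pos : 0 < m' := Nat.pos_of_ne_zero hm'0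
      have hmpos : 0 < m := Nat.pos_of_ne_zero hm0
      rw [PrimDepth, hMax, hMult, ceil_div hm'pos hm'd, Depth, Conductor, hF, hm.symm]
      have h1 : n + 1 + m - 1 = n + m := by omega
      rw [h1, Nat.add_div_right _ hmpos]
      have h2 : n / m = d / m' := by
        rw [← hgd, ← hgm, Nat.mul_div_mul_left _ _ hgpos]
      omega
    · -- degenerate case : Lefts S = {0}
      have hmgt : n < m := by omega
      have hL0 : ∀ s ∈ S, s ≠ 0 → n < s := by
        intro s hs hs0
        have := hmin s hs hs0; omega
      have hd1 : d = 1 := by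
        have hnd : n ∣ g := by
          apply hdvdg
          intro a ha
          rw [hAeq] at ha
          rcases ha with h | h
          · rcases Nat.eq_zero_or_pos a with h0 | hpos
            · simp [h0]
            · exfalso
              have := hL0 a h.1 (by omega)
              have := hLsub h
              simp at this; omega
          · simp at h; simp [h]
        have : g = n := Nat.dvd_antisymm hgn hnd
        rw [hd, this, Nat.div_self (by omega)]
      have hMult : Multiplicity (Psi S) = 1 := by
        rw [hPsi]
        exact mult_gen (hd1 ▸ hdY) (by omega) (fun y _ hy0 => by omega)
      have hmn1 : m = n + 1 := by
        have h1 : m ≤ n + 1 := Nat.sInf_le ⟨hgt _ (by omega), by omega⟩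
        omega
      rw [PrimDepth, hMax, hMult, hd1, Depth, Conductor, hF, hm.symm, hmn1]
      simp
  · -- Phi n (Psi S) = S
    have hgeq : n / MaxPrim (Psi S) = g := by
      rw [hMax, ← hgd, Nat.mul_div_cancel _ (Nat.pos_of_ne_zero hd0)]
    rw [Phi, hgeq, hMax]
    ext x
    simp only [Set.mem_union, Set.mem_image, Set.mem_inter_iff, Set.mem_Iio, Set.mem_Ici]
    constructor
    · rintro (⟨t, ⟨htT, htd⟩, rfl⟩ | hx)
      · rw [hPsi] at htT
        have htY : t ∈ Y := gen_below h0Y hYadd t htT (by omega)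
        have htA := (hYmem t).mp htY
        apply hAS _ htA
        rw [← hgd]
        exact (Nat.mul_lt_mul_left hgpos).mpr htd
      · exact hgt x (by omega)
    · intro hx
      rcases Nat.lt_trichotomy x n with h | h | h
      · left
        have hxA : x ∈ A := hSA x hx h
        refine ⟨x / g, ⟨?_, ?_⟩, Nat.mul_div_cancel' (hgdvd x hxA)⟩
        · rw [hPsi]
          exact gen_mem ((hYmem _).mpr (by rwa [Nat.mul_div_cancel' (hgdvd x hxA)]))
        · have h1 : g * (x / g) < g * d := by
            rw [Nat.mul_div_cancel' (hgdvd x hxA), hgd]; exact h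
          exact Nat.lt_of_mul_lt_mul_left h1
      · exact absurd (h ▸ hx) hnS
      · right; omega


lemma backwardMain (n : ℕ) (hn : 1 < n) (T : Set ℕ) (hNT : IsNumericalSemigroup T)
    (hdn : MaxPrim T ∣ n) :
    IsNumericalSemigroup (Phi n T) ∧ Phi n T ≠ Set.univ ∧ Frobenius (Phi n T) = n ∧
      Depth (Phi n T) = PrimDepth T ∧ Psi (Phi n T) = T := by
  obtain ⟨h0T, haddT, hfinT⟩ := hNT
  obtain ⟨B, hB⟩ := hfinT.bddAbove
  have hTgt : ∀ x, B < x → x ∈ T := by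
    intro x hx
    by_contra h
    have : x ≤ B := hB h
    omega
  set d := MaxPrim T with hdDef
  -- multiplicity of T
  set μ := Multiplicity T with hμDef
  have hSne : {s | s ∈ T ∧ s ≠ 0}.Nonempty := ⟨B + 1, hTgt _ (by omega), by omega⟩
  have hmem := Nat.sInf_mem hSne
  have hμT : μ ∈ T := hmem.1
  have hμ0 : μ ≠ 0 := hmem.2
  have hμmin : ∀ s ∈ T, s ≠ 0 → μ ≤ s := fun s hs hs0 => Nat.sInf_le ⟨hs, hs0⟩
  have hμprim : μ ∈ Primitives T := by
    refine ⟨hμT, hμ0, fun a ha b hb ha0 hb0 hab => ?_⟩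
    have := hμmin a ha ha0
    have := hμmin b hb hb0
    omega
  have hPbdd : BddAbove (Primitives T) := by
    refine ⟨2 * B + 2, fun p hp => ?_⟩
    by_contra h
    push_neg at h
    obtain ⟨hpT, hp0, hps⟩ := hp
    exact hps (B + 1) (hTgt _ (by omega)) (p - B - 1) (hTgt _ (by omega))
      (by omega) (by omega) (by omega)
  have hdprim : d ∈ Primitives T := Nat.sSup_mem ⟨μ, hμprim⟩ hPbdd
  have hple : ∀ p ∈ Primitives T, p ≤ d := fun p hp => le_csSup hPbdd hp
  have hd0 : d ≠ 0 := hdprim.2.1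
  have hdT : d ∈ T := hdprim.1
  have hdpos : 0 < d := Nat.pos_of_ne_zero hd0
  have hμd : μ ≤ d := hμmin d hdT hd0
  have hgenT : GeneratedBy (T ∩ Set.Iic d) = T := by
    apply le_antisymm
    · exact gen_subset h0T haddT Set.inter_subset_left
    · intro t ht
      apply gen_mono (Y := Primitives T)
      · intro p hp
        exact ⟨hp.1, hple p hp⟩
      · exact mem_gen_primitives t ht
  have hTd1 : ∀ e : ℕ, (∀ t ∈ T ∩ Set.Iic d, e ∣ t) → e = 1 := by
    intro e he
    have heT : ∀ t ∈ T, e ∣ t := by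
      intro t ht
      rw [← hgenT] at ht
      induction ht using AddSubmonoid.closure_induction with
      | mem y hy => exact he y hy
      | zero => exact dvd_zero e
      | add a b _ _ ha hb => exact Nat.dvd_add ha hb
    have h1 : e ∣ B + 1 := heT _ (hTgt _ (by omega))
    have h2 : e ∣ B + 2 := heT _ (hTgt _ (by omega))
    have : e ∣ 1 := by
      have := Nat.dvd_sub h2 h1
      simpa using this
    exact Nat.dvd_one.mp this
  -- the map
  set g := n / d with hgDef
  have hgd : d * g = n := Nat.mul_div_cancel' hdn
  have hg0 : g ≠ 0 := by intro h; rw [h] at hgd; omega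
  have hgpos : 0 < g := Nat.pos_of_ne_zero hg0
  set S := Phi n T with hSdef
  have hSmem : ∀ x, x ∈ S ↔ (∃ t, t ∈ T ∧ t < d ∧ g * t = x) ∨ n + 1 ≤ x := by
    intro x
    rw [hSdef, Phi]
    simp only [Set.mem_union, Set.mem_image, Set.mem_inter_iff, Set.mem_Iio, Set.mem_Ici]
    constructor
    · rintro (⟨t, ⟨ht, htd⟩, rfl⟩ | h)
      · exact Or.inl ⟨t, ht, htd, rfl⟩
      · exact Or.inr h
    · rintro (⟨t, ht, htd, rfl⟩ | h)
      · exact Or.inl ⟨t, ⟨ht, htd⟩, rfl⟩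
      · exact Or.inr h
  have h0S : (0:ℕ) ∈ S := (hSmem 0).mpr (Or.inl ⟨0, h0T, hdpos, by ring⟩)
  have haddS : ∀ a ∈ S, ∀ b ∈ S, a + b ∈ S := by
    intro a ha b hb
    rw [hSmem] at ha hb ⊢
    rcases ha with ⟨t1, ht1, ht1d, rfl⟩ | ha
    · rcases hb with ⟨t2, ht2, ht2d, rfl⟩ | hb
      · rcases Nat.lt_trichotomy (t1 + t2) d with h | h | h
        · exact Or.inl ⟨t1 + t2, haddT _ ht1 _ ht2, h, by ring⟩
        · exfalso
          have ht10 : t1 ≠ 0 := by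
            intro h0; rw [h0] at h; omega
          have ht20 : t2 ≠ 0 := by
            intro h0; rw [h0] at h; omega
          exact hdprim.2.2 t1 ht1 t2 ht2 ht10 ht20 h
        · right
          have : g * (t1 + t2) ≥ g * (d + 1) := Nat.mul_le_mul_left g (by omega)
          have h2 : g * (d + 1) = n + g := by rw [Nat.mul_add, Nat.mul_comm g d, hgd]; ring
          have h3 : g * t1 + g * t2 = g * (t1 + t2) := by ring
          omega
      · right
        omega
    · right; omega
  have hnS : n ∉ S := by
    intro h
    rw [hSmem] at h
    rcases h with ⟨t, ht, htd, hgtn⟩ | h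
    · have : g * t < g * d := (Nat.mul_lt_mul_left hgpos).mpr htd
      rw [Nat.mul_comm g d, hgd] at this
      omega
    · omega
  have hgtS : ∀ x, n < x → x ∈ S := fun x hx => (hSmem x).mpr (Or.inr (by omega))
  have hfinS : (Sᶜ : Set ℕ).Finite := by
    apply Set.Finite.subset (Set.finite_Iic n)
    intro x hx
    simp only [Set.mem_Iic]
    by_contra h
    exact hx (hgtS x (by omega))
  have hne : S ≠ Set.univ := by
    intro h
    exact hnS (h ▸ Set.mem_univ n)
  have hFrob : Frobenius S = n := by
    rw [Frobenius]
    apply le_antisymm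
    · apply csSup_le ⟨n, hnS⟩
      intro x hx
      by_contra h
      exact hx (hgtS x (by omega))
    · have hb : BddAbove (Sᶜ : Set ℕ) := by
        refine ⟨n, fun x hx => ?_⟩
        by_contra h
        exact hx (hgtS x (by omega))
      exact le_csSup hb hnS
  refine ⟨⟨h0S, haddS, hfinS⟩, hne, hFrob, ?_, ?_⟩
  · -- Depth S = PrimDepth T
    rcases Nat.lt_or_ge μ d with hμlt | hμge
    · have hgμS : g * μ ∈ S := (hSmem _).mpr (Or.inl ⟨μ, hμT, hμlt, rfl⟩)
      have hgμ0 : g * μ ≠ 0 := by positivity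
      have hMultS : Multiplicity S = g * μ := by
        rw [Multiplicity]
        refine le_antisymm (Nat.sInf_le ?_) (le_csInf ?_ ?_)
        · exact ⟨hgμS, hgμ0⟩
        · exact ⟨g * μ, hgμS, hgμ0⟩
        rintro s ⟨hs, hs0⟩
        rw [hSmem] at hs
        rcases hs with ⟨t, ht, htd, rfl⟩ | hs
        · have ht0 : t ≠ 0 := by
            intro h0; rw [h0] at hs0; simp at hs0
          exact Nat.mul_le_mul_left g (hμmin t ht ht0)
        · have : g * μ < g * d := (Nat.mul_lt_mul_left hgpos).mpr hμlt
          rw [Nat.mul_comm g d, hgd] at this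
          omega
      have hμnd : ¬ μ ∣ d := by
        intro hdvd
        obtain ⟨q, hq⟩ := hdvd
        have hq2 : 2 ≤ q := by
          rcases Nat.lt_or_ge q 2 with h | h
          · interval_cases q <;> omega
          · exact h
        have hμq : μ * (q - 1) ∈ T := by
          rw [Nat.mul_comm]
          exact mul_mem_of h0T haddT _ _ hμT
        apply hdprim.2.2 μ hμT (μ * (q - 1)) hμq hμ0
          (by
            intro h
            rcases Nat.mul_eq_zero.mp h with h | h
            · exact hμ0 h
            · omega)
        rw [hq]
        calc μ + μ * (q - 1) = μ * (1 + (q - 1)) := by ring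
          _ = μ * q := by congr 1; omega
      have hμpos : 0 < μ := Nat.pos_of_ne_zero hμ0
      rw [Depth, Conductor, hFrob, hMultS, PrimDepth, ← hdDef, ← hμDef,
        ceil_div hμpos hμnd]
      have h1 : n + 1 + g * μ - 1 = n + g * μ := by omega
      rw [h1, Nat.add_div_right _ (by positivity)]
      have h2 : n / (g * μ) = d / μ := by
        rw [← hgd, Nat.mul_comm d g, Nat.mul_div_mul_left _ _ hgpos]
      omega
    · -- μ = d : T ∩ Iio d = {0}
      have hμeq : μ = d := by omega
      have hTlo : ∀ t ∈ T, t < d → t = 0 := by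
        intro t ht htd
        by_contra h
        have := hμmin t ht h
        omega
      have hMultS : Multiplicity S = n + 1 := by
        rw [Multiplicity]
        refine le_antisymm (Nat.sInf_le ?_) (le_csInf ?_ ?_)
        · exact ⟨hgtS _ (by omega), by omega⟩
        · exact ⟨n + 1, hgtS _ (by omega), by omega⟩
        rintro s ⟨hs, hs0⟩
        rw [hSmem] at hs
        rcases hs with ⟨t, ht, htd, rfl⟩ | hs
        · have := hTlo t ht htd
          subst this
          simp at hs0
        · omega
      rw [Depth, Conductor, hFrob, hMultS, PrimDepth, ← hdDef, ← hμDef, hμeq]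
      have h1 : (d + d - 1) / d = 1 := Nat.div_eq_of_lt_le (by omega) (by omega)
      have h2 : (n + 1 + (n + 1) - 1) / (n + 1) = 1 := Nat.div_eq_of_lt_le (by omega) (by omega)
      rw [h1, h2]
  · -- Psi S = T
    have hLefts' : Lefts' S = (fun t => g * t) '' (T ∩ Set.Iic d) := by
      rw [Lefts', Lefts, hFrob]
      ext x
      simp only [Set.mem_union, Set.mem_setOf_eq, Set.mem_singleton_iff, Set.mem_image,
        Set.mem_inter_iff, Set.mem_Iic]
      constructor
      · rintro (⟨hx, hxn⟩ | rfl)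
        · rw [hSmem] at hx
          rcases hx with ⟨t, ht, htd, rfl⟩ | hx
          · exact ⟨t, ⟨ht, by omega⟩, rfl⟩
          · omega
        · exact ⟨d, ⟨hdT, le_refl d⟩, by rw [Nat.mul_comm]; exact hgd⟩
      · rintro ⟨t, ⟨ht, htd⟩, rfl⟩
        rcases Nat.lt_or_ge t d with h | h
        · left
          refine ⟨(hSmem _).mpr (Or.inl ⟨t, ht, h, rfl⟩), ?_⟩
          have : g * t < g * d := (Nat.mul_lt_mul_left hgpos).mpr h
          rw [Nat.mul_comm g d, hgd] at this
          exact this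
        · right
          have : t = d := by omega
          rw [this, Nat.mul_comm]
          exact hgd
    have hWfin : (Lefts' S).Finite := by
      rw [hLefts']
      apply Set.Finite.image
      exact (Set.finite_Iic d).subset Set.inter_subset_right
    have hnW : n ∈ Lefts' S := by
      rw [Lefts', hFrob]; right; rfl
    obtain ⟨hgdvd, hdvdg, hG0⟩ := setGcd_spec hWfin hnW (by omega)
    have hGg : SetGcd (Lefts' S) = g := by
      have hgW : ∀ w ∈ Lefts' S, g ∣ w := by
        intro w hw
        rw [hLefts'] at hw
        obtain ⟨t, _, rfl⟩ := hw
        exact Dvd.intro t rfl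
      have h1 : g ∣ SetGcd (Lefts' S) := hdvdg g hgW
      obtain ⟨s, hs⟩ := h1
      have hs1 : s = 1 := by
        apply hTd1
        intro t ht
        have : SetGcd (Lefts' S) ∣ g * t := hgdvd _ (by
          rw [hLefts']; exact ⟨t, ht, rfl⟩)
        rw [hs] at this
        exact (Nat.mul_dvd_mul_iff_left hgpos).mp this
      rw [hs, hs1, Nat.mul_one]
    rw [Psi, hGg, hLefts']
    have himg : (fun a => a / g) '' ((fun t => g * t) '' (T ∩ Set.Iic d)) = T ∩ Set.Iic d := by
      ext x
      simp only [Set.mem_image, Set.mem_inter_iff, Set.mem_Iic]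
      constructor
      · rintro ⟨y, ⟨t, ⟨ht, htd⟩, rfl⟩, rfl⟩
        rw [Nat.mul_div_cancel_left _ hgpos]
        exact ⟨ht, htd⟩
      · rintro ⟨ht, htd⟩
        exact ⟨g * x, ⟨x, ⟨ht, htd⟩, rfl⟩, Nat.mul_div_cancel_left _ hgpos⟩
    rw [himg, hgenT]


end NS9

/-- Ψ(S) = ⟨L'(S)/gcd(L'(S))⟩ is a bijection between the numerical semigroups
with Frobenius number n and depth k, and the (disjoint) union over divisors d of n of the
numerical semigroups with maximum primitive d and primitive depth k. -/
theorem stmt9 (n : ℕ) (hn : 1 < n) (k : ℕ) (hk : 0 < k) :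
    Set.BijOn Psi
      {S : Set ℕ | IsNumericalSemigroup S ∧ S ≠ Set.univ ∧ Frobenius S = n ∧ Depth S = k}
      {T : Set ℕ | ∃ d, d ∣ n ∧ IsNumericalSemigroup T ∧ MaxPrim T = d ∧ PrimDepth T = k} := by
  have hmapsF : Set.MapsTo Psi
      {S : Set ℕ | IsNumericalSemigroup S ∧ S ≠ Set.univ ∧ Frobenius S = n ∧ Depth S = k}
      {T : Set ℕ | ∃ d, d ∣ n ∧ IsNumericalSemigroup T ∧ MaxPrim T = d ∧ PrimDepth T = k} := by
    rintro S ⟨hNS, hne, hF, hD⟩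
    obtain ⟨h1, h2, h3, _⟩ := NS9.forwardMain n hn S hNS hne hF
    exact ⟨MaxPrim (Psi S), h2, h1, rfl, by rw [h3, hD]⟩
  have hmapsB : Set.MapsTo (NS9.Phi n)
      {T : Set ℕ | ∃ d, d ∣ n ∧ IsNumericalSemigroup T ∧ MaxPrim T = d ∧ PrimDepth T = k}
      {S : Set ℕ | IsNumericalSemigroup S ∧ S ≠ Set.univ ∧ Frobenius S = n ∧ Depth S = k} := by
    rintro T ⟨d, hdn, hNT, hmax, hPD⟩
    obtain ⟨h1, h2, h3, h4, _⟩ := NS9.backwardMain n hn T hNT (by rw [hmax]; exact hdn)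
    exact ⟨h1, h2, h3, by rw [h4, hPD]⟩
  have hInv : Set.InvOn (NS9.Phi n) Psi
      {S : Set ℕ | IsNumericalSemigroup S ∧ S ≠ Set.univ ∧ Frobenius S = n ∧ Depth S = k}
      {T : Set ℕ | ∃ d, d ∣ n ∧ IsNumericalSemigroup T ∧ MaxPrim T = d ∧ PrimDepth T = k} := by
    constructor
    · rintro S ⟨hNS, hne, hF, hD⟩
      exact (NS9.forwardMain n hn S hNS hne hF).2.2.2
    · rintro T ⟨d, hdn, hNT, hmax, hPD⟩
      exact (NS9.backwardMain n hn T hNT (by rw [hmax]; exact hdn)).2.2.2.2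
  exact hInv.bijOn hmapsF hmapsB
end

section
/- For every integer n > 2, the number of subsets of the integer interval (n/2, n] that contain n and have greatest common divisor equal to 1 is Σ_{d | n} μ(n/d) · (2^(⌊(d−1)/2⌋) − 1), where μ is the Möbius function. -/
open Finset

theorem Finset.card_filter_mem_powerset {α : Type*} [DecidableEq α] {s : Finset α} {a : α}
    (ha : a ∈ s) : #{t ∈ s.powerset | a ∈ t} = 2 ^ (#s - 1) := by
  rw [← card_erase_of_mem ha, ← card_powerset]
  refine card_nbij' (·.erase a) (insert a) ?_ ?_ ?_ ?_ <;> intro t ht <;>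
    simp only [coe_powerset, coe_filter, Set.mem_preimage, Set.mem_powerset_iff,
      Set.mem_ofPred_eq, coe_subset, subset_erase, mem_powerset] at ht ⊢
  · exact ⟨(erase_subset a t).trans ht.1, notMem_erase a t⟩
  · exact ⟨insert_subset ha ht.1, mem_insert_self a t⟩
  · exact insert_erase ht.2
  · exact erase_insert ht.2

theorem Finset.gcd_image_nat_mul_left (g : ℕ) (F : Finset ℕ) :
    (F.image (g * ·)).gcd id = g * F.gcd id := by
  rw [gcd_image]
  simpa using Finset.gcd_mul_left (s := F) (f := id) (a := g)

lemma Finset.ncard_setOf_subset_coe {α : Type*} (T : Finset α) (P : Set α → Prop)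
    [DecidablePred fun F : Finset α => P (F : Set α)] :
    {A : Set α | A ⊆ T ∧ P A}.ncard = #(T.powerset.filter fun F : Finset α => P F) := by
  rw [← Set.ncard_coe_finset, ← Set.ncard_image_of_injective _ coe_injective]
  congr 1
  ext A
  simp only [Set.mem_ofPred_eq, coe_filter, mem_powerset, Set.mem_image]
  constructor
  · rintro ⟨hsub, hP⟩
    obtain ⟨F, rfl⟩ := (T.finite_toSet.subset hsub).exists_finset_coe
    exact ⟨F, ⟨coe_subset.1 hsub, hP⟩, rfl⟩
  · rintro ⟨F, ⟨hsub, hP⟩, rfl⟩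
    exact ⟨coe_subset.2 hsub, hP⟩

lemma setGcd_coe_finset {F : Finset ℕ} {a : ℕ} (ha : a ∈ F) (ha0 : a ≠ 0) :
    SetGcd ↑F = F.gcd id := by
  have hpos : 0 < F.gcd id := Nat.pos_of_ne_zero fun h => ha0 (gcd_eq_zero_iff.1 h a ha)
  have common_divisors : {d : ℕ | ∀ y ∈ (F : Set ℕ), d ∣ y} = {d | d ∣ F.gcd id} := by
    ext d
    simp [Finset.dvd_gcd_iff]
  rw [SetGcd, common_divisors]
  exact IsGreatest.csSup_eq ⟨dvd_rfl, fun d hd => Nat.le_of_dvd hpos hd⟩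

def halfInterval (m : ℕ) : Finset ℕ := Ioc (m / 2) m

lemma mem_halfInterval {m x : ℕ} : x ∈ halfInterval m ↔ m < 2 * x ∧ x ≤ m := by
  simp only [halfInterval, mem_Ioc]; omega

lemma mul_mem_halfInterval_mul_iff {g m x : ℕ} (hg : 0 < g) :
    g * x ∈ halfInterval (g * m) ↔ x ∈ halfInterval m := by
  simp only [mem_halfInterval, mul_left_comm 2 g, Nat.mul_lt_mul_left hg,
    Nat.mul_le_mul_left_iff hg]

lemma pos_of_mem_halfInterval {m x : ℕ} (hx : x ∈ halfInterval m) : 0 < x := by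
  have := mem_halfInterval.1 hx; omega

def topSubsets (m : ℕ) : Finset (Finset ℕ) := {F ∈ (halfInterval m).powerset | m ∈ F}

def coprimeTopSubsets (m : ℕ) : Finset (Finset ℕ) := {F ∈ topSubsets m | F.gcd id = 1}

lemma card_topSubsets_filter_gcd_eq {g : ℕ} (hg : 0 < g) (e : ℕ) :
    #{F ∈ topSubsets (g * e) | F.gcd id = g} = #(coprimeTopSubsets e) := by
  symm
  refine card_nbij' (·.image (g * ·)) (·.image (· / g)) ?_ ?_ ?_ ?_ <;> intro F hF <;>
    simp only [coprimeTopSubsets, topSubsets, mem_coe, mem_filter, mem_powerset] at hF ⊢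
  · obtain ⟨⟨hsub, he⟩, hgcd⟩ := hF
    refine ⟨⟨?_, mem_image_of_mem _ he⟩, by rw [gcd_image_nat_mul_left, hgcd, mul_one]⟩
    intro x hx
    obtain ⟨u, hu, rfl⟩ := mem_image.1 hx
    exact (mul_mem_halfInterval_mul_iff hg).2 (hsub hu)
  · obtain ⟨⟨hsub, he⟩, hgcd⟩ := hF
    refine ⟨⟨?_, mem_image.2 ⟨g * e, he, Nat.mul_div_cancel_left e hg⟩⟩, ?_⟩
    · intro x hx
      obtain ⟨y, hy, rfl⟩ := mem_image.1 hx
      obtain ⟨u, rfl⟩ := hgcd ▸ gcd_dvd hy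
      rw [Nat.mul_div_cancel_left u hg]
      exact (mul_mem_halfInterval_mul_iff hg).1 (hsub hy)
    · rw [gcd_image, ← hgcd]
      exact gcd_div_id_eq_one he (pos_of_mem_halfInterval (hsub he)).ne'
  · rw [image_image]
    exact (image_congr fun u _ => Nat.mul_div_cancel_left u hg).trans image_id
  · rw [image_image]
    refine (image_congr fun x hx => Nat.mul_div_cancel' ?_).trans image_id
    exact hF.2 ▸ gcd_dvd hx

lemma card_topSubsets {m : ℕ} (hm : 0 < m) : #(topSubsets m) = 2 ^ ((m - 1) / 2) := by
  rw [topSubsets, card_filter_mem_powerset (mem_halfInterval.2 (by omega)), halfInterval,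
    Nat.card_Ioc]
  congr 1
  omega

lemma sum_card_coprimeTopSubsets {m : ℕ} (hm : 0 < m) :
    ∑ e ∈ m.divisors, #(coprimeTopSubsets e) = 2 ^ ((m - 1) / 2) := by
  have gcd_mem_divisors : ∀ F ∈ topSubsets m, F.gcd id ∈ m.divisors := fun F hF =>
    Nat.mem_divisors.2 ⟨gcd_dvd (mem_filter.1 hF).2, hm.ne'⟩
  rw [← card_topSubsets hm, card_eq_sum_card_fiberwise gcd_mem_divisors, ← Nat.sum_div_divisors]
  refine sum_congr rfl fun g hg => ?_
  have fiber := card_topSubsets_filter_gcd_eq (Nat.pos_of_mem_divisors hg) (m / g)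
  rw [Nat.mul_div_cancel' (Nat.dvd_of_mem_divisors hg)] at fiber
  exact fiber.symm

open ArithmeticFunction Moebius in
lemma card_coprimeTopSubsets {n : ℕ} (hn : 1 < n) :
    (#(coprimeTopSubsets n) : ℤ) =
      ∑ d ∈ n.divisors, μ (n / d) * (2 ^ ((d - 1) / 2) - 1) := by
  have inversion := (sum_eq_iff_sum_mul_moebius_eq (f := fun m => (#(coprimeTopSubsets m) : ℤ))
    (g := fun m => (2 : ℤ) ^ ((m - 1) / 2))).1
    (fun m hm => by exact_mod_cast sum_card_coprimeTopSubsets hm) n (by omega)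
  have sum_moebius : ∑ d ∈ n.divisors, μ (n / d) = 0 := by
    rw [Nat.sum_div_divisors n μ, ← coe_mul_zeta_apply, moebius_mul_coe_zeta,
      one_apply_ne hn.ne']
  simp only [Int.cast_id] at inversion
  rw [Nat.sum_divisorsAntidiagonal' (f := fun a b => μ a * 2 ^ ((b - 1) / 2))] at inversion
  simp only [mul_sub, mul_one, sum_sub_distrib, sum_moebius, sub_zero, inversion]

/-- the number of subsets of (n/2, n] containing n with gcd 1 is
Σ_{d∣n} μ(n/d) · (2^⌊(d−1)/2⌋ − 1). -/
theorem stmt13 (n : ℕ) (hn : 2 < n) :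
    ({A : Set ℕ | A ⊆ {x | n < 2 * x ∧ x ≤ n} ∧ n ∈ A ∧ SetGcd A = 1}.ncard : ℤ)
      = ∑ d ∈ n.divisors, (ArithmeticFunction.moebius (n / d)) *
          (2 ^ ((d - 1) / 2) - 1 : ℤ) := by
  classical
  have interval : {x | n < 2 * x ∧ x ≤ n} = (halfInterval n : Set ℕ) :=
    Set.ext fun _ => mem_halfInterval.symm
  rw [interval, ncard_setOf_subset_coe, ← card_coprimeTopSubsets (by omega)]
  congr 2
  ext F
  simp only [coprimeTopSubsets, topSubsets, mem_filter, mem_coe, and_assoc]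
  refine and_congr_right fun _ => and_congr_right fun hnF => ?_
  rw [setGcd_coe_finset hnF (by omega)]
end

section
/- Let S be a numerical semigroup with maximum primitive n. Then the set Φ(S) = (S \ {n}) ∪ (n, ∞) is a numerical semigroup with Frobenius number n. -/
/-- for S with maximum primitive n, Φ(S) = (S \ {n}) ∪ (n, ∞) is a numerical
semigroup with Frobenius number n. -/
theorem stmt18 (S : Set ℕ) (hS : IsNumericalSemigroup S) (n : ℕ) (hn : MaxPrim S = n) :
    IsNumericalSemigroup ((S \ {n}) ∪ Set.Ioi n) ∧
    Frobenius ((S \ {n}) ∪ Set.Ioi n) = n := by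
  obtain ⟨h0, hadd, hfin⟩ := hS
  -- everything above the Frobenius number is in S
  have hbig : ∀ k, Frobenius S < k → k ∈ S := by
    intro k hk
    by_contra hkS
    exact absurd (le_csSup hfin.bddAbove (by exact hkS)) (not_le.mpr hk)
  have hF1 : Frobenius S + 1 ∈ S := hbig _ (Nat.lt_succ_self _)
  -- Primitives S is nonempty: the multiplicity is primitive
  have hMne : {s | s ∈ S ∧ s ≠ 0}.Nonempty := ⟨Frobenius S + 1, hF1, Nat.succ_ne_zero _⟩
  set m := sInf {s | s ∈ S ∧ s ≠ 0} with hm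
  have hmmem : m ∈ {s | s ∈ S ∧ s ≠ 0} := Nat.sInf_mem hMne
  have hmprim : m ∈ Primitives S := by
    refine ⟨hmmem.1, hmmem.2, ?_⟩
    intro a ha b hb ha0 hb0 hab
    have h1 : m ≤ a := Nat.sInf_le ⟨ha, ha0⟩
    omega
  -- Primitives S is bounded above
  have hbdd : BddAbove (Primitives S) := by
    refine ⟨2 * (Frobenius S + 1), ?_⟩
    intro p hp
    by_contra hlt
    push_neg at hlt
    have h1 : p - (Frobenius S + 1) ∈ S := hbig _ (by omega)
    exact hp.2.2 _ hF1 _ h1 (Nat.succ_ne_zero _) (by omega) (by omega)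
  have hnprim : n ∈ Primitives S := by
    rw [← hn]; exact Nat.sSup_mem ⟨m, hmprim⟩ hbdd
  obtain ⟨hnS, hn0, hnsum⟩ := hnprim
  set T := (S \ {n}) ∪ Set.Ioi n with hT
  have hnT : n ∉ T := by
    intro h
    rcases h with h | h
    · exact h.2 rfl
    · exact lt_irrefl n h
  have hTns : IsNumericalSemigroup T := by
    refine ⟨Or.inl ⟨h0, fun h => hn0 h.symm⟩, ?_, ?_⟩
    · rintro a ha b hb
      by_cases hab : n < a + b
      · exact Or.inr hab
      · push_neg at hab
        have ha' : a ∈ S ∧ a ≠ n := by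
          rcases ha with h | h
          · exact ⟨h.1, fun e => by simp [e] at h⟩
          · exfalso; simp only [Set.mem_Ioi] at h; omega
        have hb' : b ∈ S ∧ b ≠ n := by
          rcases hb with h | h
          · exact ⟨h.1, fun e => by simp [e] at h⟩
          · exfalso; simp only [Set.mem_Ioi] at h; omega
        left
        refine ⟨hadd a ha'.1 b hb'.1, ?_⟩
        intro he
        simp only [Set.mem_singleton_iff] at he
        rcases Nat.eq_zero_or_pos a with rfl | hapos
        · simp at he; exact hb'.2 he
        rcases Nat.eq_zero_or_pos b with rfl | hbpos
        · simp at he; exact ha'.2 he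
        exact hnsum a ha'.1 b hb'.1 (by omega) (by omega) he
    · have : (Tᶜ : Set ℕ) ⊆ Sᶜ ∪ {n} := by
        intro x hx
        simp only [hT, Set.mem_compl_iff, Set.mem_union, Set.mem_diff,
          Set.mem_singleton_iff, Set.mem_Ioi, not_or, not_and, not_lt] at hx ⊢
        by_cases hxn : x = n
        · right; exact hxn
        · left; intro hxS; exact hxn (by tauto)
      exact ((hfin.union (Set.finite_singleton n)).subset this)
  refine ⟨hTns, ?_⟩
  have hTc : n ∈ (Tᶜ : Set ℕ) := hnT
  have hble : ∀ x ∈ (Tᶜ : Set ℕ), x ≤ n := by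
    intro x hx
    by_contra hlt
    exact hx (Or.inr (by simpa using not_le.mp hlt))
  exact le_antisymm (csSup_le ⟨n, hTc⟩ hble) (le_csSup ⟨n, hble⟩ hTc)
end

section
/- Let T be a numerical semigroup with maximum primitive d, let n be a positive multiple of d, and set T' = (⟨(n/d)·P(T)⟩ \ {n}) ∪ {k ∈ ℕ : k > n}, where P(T) is the set of primitives of T. Then T' is a numerical semigroup with Frobenius number n, and applying the map S ↦ ⟨L'(S)/gcd(L'(S))⟩ to T' recovers T, where L'(S) = {s ∈ S : s < F(S)} ∪ {F(S)}. -/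
/-! With `q = n / d`, the submonoid generated by `q · P(T)` is `q · T`, and `n = q · d` is not a
sum of two nonzero elements of it because `d` is primitive; so deleting `n` and adding everything
above it gives a numerical semigroup with Frobenius number `n`. Its left elements together with
`n` lie in `q · T` and contain `q · P(T)`, as every primitive is at most `d`. Since `T` contains
two consecutive integers, their gcd is `q`, and dividing by `q` yields a subset of `T` containing
`P(T)`, which generates `T`. -/

open Set

theorem closure_primitives (S : AddSubmonoid ℕ) :
    AddSubmonoid.closure (Primitives S) = S := by
  refine le_antisymm (AddSubmonoid.closure_le.mpr fun p hp => hp.1) fun s => ?_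
  induction s using Nat.strong_induction_on with
  | _ s ih =>
    intro hs
    rcases eq_or_ne s 0 with rfl | hs0
    · exact zero_mem _
    by_cases hp : s ∈ Primitives S
    · exact AddSubmonoid.subset_closure hp
    obtain ⟨a, ha, b, hb, ha0, hb0, rfl⟩ : ∃ a ∈ S, ∃ b ∈ S, a ≠ 0 ∧ b ≠ 0 ∧ a + b = s := by
      by_contra! h
      exact hp ⟨hs, hs0, h⟩
    exact add_mem (ih a (by omega) ha) (ih b (by omega) hb)

theorem generatedBy_image_mul (q : ℕ) (Y : Set ℕ) :
    GeneratedBy ((q * ·) '' Y) = (q * ·) '' GeneratedBy Y := by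
  change (AddSubmonoid.closure (AddMonoidHom.mulLeft q '' Y) : Set ℕ) =
    AddMonoidHom.mulLeft q '' AddSubmonoid.closure Y
  rw [← AddMonoidHom.map_mclosure, AddSubmonoid.coe_map]

theorem dvd_of_mem_generatedBy {Y : Set ℕ} {e x : ℕ} (he : ∀ y ∈ Y, e ∣ y)
    (hx : x ∈ GeneratedBy Y) : e ∣ x := by
  induction hx using AddSubmonoid.closure_induction with
  | mem y hy => exact he y hy
  | zero => exact dvd_zero e
  | add _ _ _ _ ha hb => exact dvd_add ha hb

theorem setGcd_eq_of_dvd {Y : Set ℕ} {g : ℕ} (hg : 0 < g) (hdvd : ∀ y ∈ Y, g ∣ y)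
    (hmax : ∀ e, (∀ y ∈ Y, e ∣ y) → e ∣ g) : SetGcd Y = g :=
  IsGreatest.csSup_eq ⟨hdvd, fun e he => Nat.le_of_dvd hg (hmax e he)⟩

namespace IsNumericalSemigroup

variable {T : Set ℕ} (hT : IsNumericalSemigroup T)
include hT

def toAddSubmonoid : AddSubmonoid ℕ where
  carrier := T
  zero_mem' := hT.1
  add_mem' := fun {a b} ha hb => hT.2.1 a ha b hb

theorem mem_of_frobenius_lt {t : ℕ} (ht : Frobenius T < t) : t ∈ T := by
  by_contra h
  exact (le_csSup hT.2.2.bddAbove h).not_gt ht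

theorem multiplicity_mem : Multiplicity T ∈ T ∧ Multiplicity T ≠ 0 := by
  obtain ⟨x, hxT, hx0⟩ := (hT.2.2.infinite_compl.sdiff (finite_singleton 0)).nonempty
  exact Nat.sInf_mem (s := {s | s ∈ T ∧ s ≠ 0}) ⟨x, by simpa using hxT, hx0⟩

theorem generatedBy_primitives : GeneratedBy (Primitives T) = T :=
  congrArg SetLike.coe (closure_primitives hT.toAddSubmonoid)

theorem generatedBy_eq_of_primitives_subset {A : Set ℕ} (hPA : Primitives T ⊆ A)
    (hAT : A ⊆ T) : GeneratedBy A = T := by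
  refine le_antisymm (AddSubmonoid.closure_le (S := hT.toAddSubmonoid).mpr hAT) ?_
  rw [← hT.generatedBy_primitives]
  exact AddSubmonoid.closure_mono hPA

theorem primitives_nonempty : (Primitives T).Nonempty := by
  obtain ⟨hm, hm0⟩ := hT.multiplicity_mem
  refine ⟨Multiplicity T, hm, hm0, fun a ha b _ ha0 hb0 hab => ?_⟩
  have : Multiplicity T ≤ a := Nat.sInf_le ⟨ha, ha0⟩
  omega

/-- A primitive `p > m + F(T)` would be the sum of `m` and `p - m ∈ T`. -/
theorem primitives_bddAbove : BddAbove (Primitives T) := by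
  refine ⟨Multiplicity T + Frobenius T, fun p hp => ?_⟩
  by_contra! hlt
  obtain ⟨hm, hm0⟩ := hT.multiplicity_mem
  exact hp.2.2 _ hm (p - Multiplicity T) (hT.mem_of_frobenius_lt (by omega)) hm0 (by omega)
    (by omega)

theorem maxPrim_mem_primitives : MaxPrim T ∈ Primitives T :=
  Nat.sSup_mem hT.primitives_nonempty hT.primitives_bddAbove

theorem le_maxPrim {p : ℕ} (hp : p ∈ Primitives T) : p ≤ MaxPrim T :=
  le_csSup hT.primitives_bddAbove hp

/-- `F(T) + 1` and `F(T) + 2` are consecutive elements of `T`. -/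
theorem dvd_of_forall_dvd_mul {e q : ℕ} (h : ∀ t ∈ T, e ∣ q * t) : e ∣ q := by
  have hc := h _ (hT.mem_of_frobenius_lt (Nat.lt_succ_self (Frobenius T)))
  have hc' := h _ (hT.mem_of_frobenius_lt (by omega : Frobenius T < Frobenius T + 1 + 1))
  rw [mul_add, mul_one] at hc'
  exact (Nat.dvd_add_right hc).mp hc'

theorem setGcd_eq_of_image_mul_subset {q : ℕ} {Y : Set ℕ} (hq : 0 < q)
    (hPY : (q * ·) '' Primitives T ⊆ Y) (hYT : Y ⊆ (q * ·) '' T) : SetGcd Y = q := by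
  refine setGcd_eq_of_dvd hq (fun y hy => ?_) fun e he => hT.dvd_of_forall_dvd_mul fun t ht => ?_
  · obtain ⟨t, -, rfl⟩ := hYT hy
    exact dvd_mul_right q t
  · refine dvd_of_mem_generatedBy (fun y hy => he y (hPY hy)) ?_
    rw [generatedBy_image_mul, hT.generatedBy_primitives]
    exact mem_image_of_mem _ ht

theorem psi_eq_of_image_mul_subset {q : ℕ} {S : Set ℕ} (hq : 0 < q)
    (hPL : (q * ·) '' Primitives T ⊆ Lefts' S) (hLT : Lefts' S ⊆ (q * ·) '' T) : Psi S = T := by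
  rw [Psi, hT.setGcd_eq_of_image_mul_subset hq hPL hLT]
  refine hT.generatedBy_eq_of_primitives_subset (fun p hp => ⟨q * p, hPL ⟨p, hp, rfl⟩, ?_⟩) ?_
  · exact Nat.mul_div_cancel_left p hq
  · rintro _ ⟨y, hy, rfl⟩
    obtain ⟨t, ht, rfl⟩ := hLT hy
    simpa [Nat.mul_div_cancel_left t hq] using ht

end IsNumericalSemigroup

theorem frobenius_diff_union_Ioi (S : Set ℕ) (n : ℕ) :
    Frobenius ((S \ {n}) ∪ Ioi n) = n := by
  have hn : n ∈ ((S \ {n}) ∪ Ioi n)ᶜ := by simp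
  have hle : ∀ x ∈ ((S \ {n}) ∪ Ioi n)ᶜ, x ≤ n := fun x hx => by
    by_contra! h
    exact hx (Or.inr h)
  exact IsGreatest.csSup_eq ⟨hn, hle⟩

theorem lefts'_diff_union_Ioi (S : Set ℕ) (n : ℕ) :
    Lefts' ((S \ {n}) ∪ Ioi n) = (S ∩ Iio n) ∪ {n} := by
  ext x
  simp only [Lefts', Lefts, frobenius_diff_union_Ioi, mem_union, mem_sdiff, mem_singleton_iff,
    mem_Ioi, mem_inter_iff, mem_Iio, mem_ofPred_eq]
  constructor
  · rintro (⟨⟨hx, -⟩ | hx, hxn⟩ | rfl)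
    · exact Or.inl ⟨hx, hxn⟩
    · omega
    · exact Or.inr rfl
  · rintro (⟨hx, hxn⟩ | rfl)
    · exact Or.inl ⟨Or.inl ⟨hx, hxn.ne⟩, hxn⟩
    · exact Or.inr rfl

theorem isNumericalSemigroup_diff_union_Ioi {S : Set ℕ} {n : ℕ} (h0 : 0 ∈ S)
    (hadd : ∀ a ∈ S, ∀ b ∈ S, a + b ∈ S) (hn : n ≠ 0)
    (hsum : ∀ a ∈ S, ∀ b ∈ S, a ≠ 0 → b ≠ 0 → a + b ≠ n) :
    IsNumericalSemigroup ((S \ {n}) ∪ Ioi n) := by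
  refine ⟨Or.inl ⟨h0, hn.symm⟩, fun a ha b hb => ?_, ?_⟩
  · rcases lt_or_ge n (a + b) with hab | hab
    · exact Or.inr hab
    obtain ⟨haS, han⟩ : a ∈ S ∧ a ≠ n := by
      rcases ha with ha | ha
      · exact ha
      · exact absurd ha (by simp only [mem_Ioi]; omega)
    obtain ⟨hbS, hbn⟩ : b ∈ S ∧ b ≠ n := by
      rcases hb with hb | hb
      · exact hb
      · exact absurd hb (by simp only [mem_Ioi]; omega)
    refine Or.inl ⟨hadd a haS b hbS, fun habn => hsum a haS b hbS ?_ ?_ habn⟩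
    · rintro rfl; exact hbn (by simpa using habn)
    · rintro rfl; exact han (by simpa using habn)
  · exact (finite_Iic n).subset fun x hx =>
      mem_Iic.mpr (not_lt.mp fun h => hx (Or.inr h))

theorem add_ne_mul_of_mem_primitives {T : Set ℕ} {p : ℕ} (hp : p ∈ Primitives T) (q : ℕ) :
    ∀ a ∈ (q * ·) '' T, ∀ b ∈ (q * ·) '' T, a ≠ 0 → b ≠ 0 → a + b ≠ q * p := by
  rintro _ ⟨s, hs, rfl⟩ _ ⟨t, ht, rfl⟩ hs0 ht0 hst
  have hq : 0 < q := Nat.pos_of_ne_zero (left_ne_zero_of_mul hs0)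
  rw [← mul_add] at hst
  exact hp.2.2 s hs t ht (right_ne_zero_of_mul hs0) (right_ne_zero_of_mul ht0)
    (Nat.eq_of_mul_eq_mul_left hq hst)

/-- for T with maximum primitive d and n a positive multiple of d,
T' = (⟨(n/d)·P(T)⟩ \ {n}) ∪ (n, ∞) is a numerical semigroup with Frobenius number n,
and Ψ(T') = T where Ψ(S) = ⟨L'(S)/gcd(L'(S))⟩. -/
theorem stmt19 (T : Set ℕ) (hT : IsNumericalSemigroup T) (d : ℕ) (hd : MaxPrim T = d)
    (n : ℕ) (hn : 0 < n) (hdvd : d ∣ n) :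
    IsNumericalSemigroup
      ((GeneratedBy ((fun a => (n / d) * a) '' Primitives T) \ {n}) ∪ Set.Ioi n) ∧
    Frobenius
      ((GeneratedBy ((fun a => (n / d) * a) '' Primitives T) \ {n}) ∪ Set.Ioi n) = n ∧
    Psi ((GeneratedBy ((fun a => (n / d) * a) '' Primitives T) \ {n}) ∪ Set.Ioi n) = T := by
  subst hd
  obtain ⟨q, rfl⟩ := hdvd
  have hdP := hT.maxPrim_mem_primitives
  have hd0 : 0 < MaxPrim T := Nat.pos_of_ne_zero hdP.2.1
  have hq : 0 < q := Nat.pos_of_mul_pos_left hn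
  rw [Nat.mul_div_cancel_left q hd0, mul_comm (MaxPrim T) q]
  have hS : GeneratedBy ((q * ·) '' Primitives T) = (q * ·) '' T := by
    rw [generatedBy_image_mul, hT.generatedBy_primitives]
  refine ⟨?_, frobenius_diff_union_Ioi _ _, ?_⟩
  · refine isNumericalSemigroup_diff_union_Ioi (zero_mem (AddSubmonoid.closure _))
      (fun _ ha _ hb => (AddSubmonoid.closure _).add_mem ha hb)
      (mul_pos hq hd0).ne' ?_
    rw [hS]
    exact add_ne_mul_of_mem_primitives hdP q
  refine hT.psi_eq_of_image_mul_subset hq ?_ ?_ <;> rw [lefts'_diff_union_Ioi]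
  · rintro _ ⟨p, hp, rfl⟩
    rcases (hT.le_maxPrim hp).lt_or_eq with hlt | rfl
    · exact Or.inl ⟨AddSubmonoid.subset_closure (mem_image_of_mem _ hp),
        Nat.mul_lt_mul_of_pos_left hlt hq⟩
    · exact Or.inr rfl
  · rw [hS]
    exact union_subset inter_subset_left (singleton_subset_iff.mpr (mem_image_of_mem _ hdP.1))
end
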